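/- If p_1 > p_2 are coprime, p_1 = a·p_2 + b with 0 < b < p_2, and c = 1 (d'Hondt), then the apportionment sequence over one period is 1^a 2 1^{k_2} 2 ... 1^{k_{p_2}} 2, where k_i = a + 1 if i ∈ {⌈p_2/b⌉, ⌈2p_2/b⌉, ..., ⌈b·p_2/b⌉} and k_i = a otherwise. -/

import Mathlib

open ENNReal

/-- Number of seats party `i` holds after the first `h` seats of sequence `s`. -/
def alloc {n : ℕ} (s : ℕ → Fin n) (i : Fin n) (h : ℕ) : ℕ :=
  ((Finset.range h).filter (fun t => s t = i)).card

/-- `s` is the apportionment sequence of the stationary divisor method with cut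
point `c` for votes `p`: each seat goes to the party maximizing `pᵢ/(aᵢ+c)`
(computed in `ℝ≥0∞`, so that `pᵢ/0 = ∞` encodes the Adams convention), with
ties broken in favor of the smaller index. -/
def IsStationarySeq {n : ℕ} (p : Fin n → ℕ) (c : NNReal) (s : ℕ → Fin n) : Prop :=
  ∀ h : ℕ, ∀ j : Fin n,
    (p j : ℝ≥0∞) / ((alloc s j h : ℝ≥0∞) + (c : ℝ≥0∞)) <
        (p (s h) : ℝ≥0∞) / ((alloc s (s h) h : ℝ≥0∞) + (c : ℝ≥0∞)) ∨
    ((p (s h) : ℝ≥0∞) / ((alloc s (s h) h : ℝ≥0∞) + (c : ℝ≥0∞)) =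
        (p j : ℝ≥0∞) / ((alloc s j h : ℝ≥0∞) + (c : ℝ≥0∞)) ∧ s h ≤ j)


open Finset

/-! For two parties, d'Hondt gives seat `t` to party 2 exactly when
`(p₁ + p₂)(a₂ + 1) < p₂(t + 2)`, where `a₂` is its current number of seats. By induction `a₂` is
the largest `k` with `k(p₁ + p₂) < (t + 1)p₂`, so party 2 takes seat `t` exactly when some `i`
satisfies `(t + 1)p₂ ≤ i(p₁ + p₂) < (t + 2)p₂`, i.e. `t + 1 = i + ⌊i p₁ / p₂⌋`; this `i` is the
number of the seat for party 2. Finally `⌊i p₁ / p₂⌋ = a i + ⌊i b / p₂⌋`, and since `b < p₂` the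
floor `⌊i b / p₂⌋` grows by one exactly when `i = ⌈j p₂ / b⌉` for some `j ≤ b`. -/

lemma alloc_succ {n : ℕ} (s : ℕ → Fin n) (i : Fin n) (t : ℕ) :
    alloc s i (t + 1) = alloc s i t + if s t = i then 1 else 0 := by
  unfold alloc
  rw [range_add_one, filter_insert]
  split_ifs with h
  · exact card_insert_of_notMem (by simp)
  · rfl

lemma alloc_zero_add_alloc_one (s : ℕ → Fin 2) (t : ℕ) : alloc s 0 t + alloc s 1 t = t := by
  have hne : ∀ v : Fin 2, v = 1 ↔ ¬v = 0 := by decide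
  unfold alloc
  rw [filter_congr fun x _ => hne (s x), card_filter_add_card_filter_not, card_range]

lemma ENNReal.natCast_div_add_one_lt_iff (m n x y : ℕ) :
    (m : ℝ≥0∞) / (x + 1) < n / (y + 1) ↔ m * (y + 1) < n * (x + 1) := by
  rw [ENNReal.div_lt_iff (by simp) (by simp), mul_comm, ← mul_div_assoc,
    ENNReal.lt_div_iff_mul_lt (by simp) (by simp), mul_comm (x + 1 : ℝ≥0∞)]
  exact_mod_cast Iff.rfl

namespace IsStationarySeq

variable {s : ℕ → Fin 2}

lemma eq_one_iff_lt {p : Fin 2 → ℕ} {c : NNReal} (hs : IsStationarySeq p c s) (t : ℕ) :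
    s t = 1 ↔ (p 0 : ℝ≥0∞) / (alloc s 0 t + c) < p 1 / (alloc s 1 t + c) := by
  constructor
  · intro h
    simpa [h, Fin.zero_lt_one.not_ge] using hs t 0
  · intro hlt
    by_contra h
    have h0 : s t = 0 := by omega
    have hge := hs t 1
    simp only [h0] at hge
    rcases hge with hgt | ⟨heq, -⟩
    · exact hgt.not_gt hlt
    · exact hlt.ne heq

variable {q r : ℕ}

lemma dhondt_eq_one_iff (hs : IsStationarySeq ![q, r] 1 s) (t : ℕ) :
    s t = 1 ↔ (q + r) * (alloc s 1 t + 1) < r * (t + 2) := by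
  have hsum := alloc_zero_add_alloc_one s t
  rw [hs.eq_one_iff_lt, ENNReal.coe_one, ENNReal.natCast_div_add_one_lt_iff]
  simp only [Matrix.cons_val_zero, Matrix.cons_val_one, Matrix.cons_val_fin_one]
  constructor <;> intro h <;> nlinarith

lemma dhondt_alloc_one_bounds (hs : IsStationarySeq ![q, r] 1 s) (hr : 0 < r) (t : ℕ) :
    alloc s 1 t * (q + r) < (t + 1) * r ∧ (t + 1) * r ≤ (alloc s 1 t + 1) * (q + r) := by
  induction t with
  | zero => simp [alloc, hr]
  | succ t ih =>
    rw [alloc_succ]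
    have hstep := hs.dhondt_eq_one_iff t
    split_ifs with h
    · constructor <;> nlinarith [hstep.1 h]
    · constructor <;> nlinarith [hstep.not.1 h]

lemma dhondt_eq_one_iff_exists (hs : IsStationarySeq ![q, r] 1 s) (hr : 0 < r) (t : ℕ) :
    s t = 1 ↔ ∃ i, (t + 1) * r ≤ i * (q + r) ∧ i * (q + r) < (t + 2) * r := by
  obtain ⟨hlo, hhi⟩ := hs.dhondt_alloc_one_bounds hr t
  rw [hs.dhondt_eq_one_iff]
  constructor
  · intro h
    exact ⟨alloc s 1 t + 1, hhi, by linarith⟩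
  · rintro ⟨i, hi, hi'⟩
    have hsucc_le : alloc s 1 t + 1 ≤ i := by
      by_contra! hlt
      nlinarith
    nlinarith

end IsStationarySeq

namespace Nat

lemma succ_eq_add_mul_div_iff {q r : ℕ} (hr : 0 < r) (t i : ℕ) :
    t + 1 = i + i * q / r ↔ (t + 1) * r ≤ i * (q + r) ∧ i * (q + r) < (t + 2) * r := by
  have hlo : i * q / r * r ≤ i * q := div_mul_le_self _ _
  have hhi : i * q < (i * q / r + 1) * r := (lt_mul_div_succ _ hr).trans_eq (mul_comm _ _)
  generalize i * q / r = d at hlo hhi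
  constructor
  · intro h
    constructor <;> nlinarith
  · rintro ⟨h₁, h₂⟩
    rcases lt_trichotomy (t + 1) (i + d) with h | h | h
    · nlinarith
    · exact h
    · nlinarith

lemma add_sub_one_div_eq_succ_iff {b : ℕ} (hb : 0 < b) (n m : ℕ) :
    (n + b - 1) / b = m + 1 ↔ m * b < n ∧ n ≤ (m + 1) * b := by
  rw [le_antisymm_iff, div_le_iff_le_mul_add_pred hb, le_div_iff_mul_le hb, add_one_mul,
    mul_add_one, mul_comm b m]
  omega

lemma exists_ceil_div_eq_succ_iff {b p m : ℕ} (hb : 0 < b) (hm : m < p) :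
    (∃ j ∈ Icc 1 b, m + 1 = (j * p + b - 1) / b) ↔ m * b / p < (m + 1) * b / p := by
  have hp : 0 < p := by omega
  constructor
  · rintro ⟨j, -, hj⟩
    obtain ⟨hlo, hhi⟩ := (add_sub_one_div_eq_succ_iff hb _ _).1 hj.symm
    exact ((div_lt_iff_lt_mul hp).2 hlo).trans_le ((le_div_iff_mul_le hp).2 hhi)
  · intro h
    refine ⟨(m + 1) * b / p, mem_Icc.2 ⟨Nat.zero_lt_of_lt h, ?_⟩, ?_⟩
    · exact Nat.div_le_of_le_mul (Nat.mul_le_mul_right b hm)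
    · exact ((add_sub_one_div_eq_succ_iff hb _ _).2
        ⟨(div_lt_iff_lt_mul hp).1 h, div_mul_le_self _ _⟩).symm

lemma succ_mul_div_le {b p : ℕ} (hbp : b ≤ p) (m : ℕ) : (m + 1) * b / p ≤ m * b / p + 1 := by
  rcases p.eq_zero_or_pos with rfl | hp
  · simp
  calc (m + 1) * b / p ≤ (m * b + p) / p := Nat.div_le_div_right (by rw [add_one_mul]; omega)
    _ = m * b / p + 1 := add_div_right _ hp

lemma sum_Icc_ite_exists_ceil_div {a b p m : ℕ} (hb : 0 < b) (hbp : b ≤ p) (hm : m ≤ p) :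
    ∑ j ∈ Icc 1 m, (if ∃ j' ∈ Icc 1 b, j = (j' * p + b - 1) / b then a + 1 else a) =
      a * m + m * b / p := by
  induction m with
  | zero => simp
  | succ m ih =>
    rw [sum_Icc_succ_top (by omega), ih (by omega)]
    have hmono : m * b / p ≤ (m + 1) * b / p := Nat.div_le_div_right (by nlinarith)
    have hjump := succ_mul_div_le hbp m
    split_ifs with h <;> rw [exists_ceil_div_eq_succ_iff hb hm] at h <;> rw [mul_add_one] <;> omega

end Nat

/-- Party `0` is party 1 and party `1` is party 2; `s t` is seat number `t + 1`. -/
theorem dhondt_explicit_sequence_general (p1 p2 a b : ℕ)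
    (hdiv : p1 = a * p2 + b) (hb0 : 0 < b) (hbp : b < p2)
    (s : ℕ → Fin 2) (hs : IsStationarySeq ![p1, p2] 1 s) :
    ∀ t, t < p1 + p2 →
      (s t = 1 ↔ ∃ i, 1 ≤ i ∧ i ≤ p2 ∧
        t + 1 = (∑ j ∈ Icc 1 i,
          (if ∃ j' ∈ Icc 1 b, j = (j' * p2 + b - 1) / b then a + 1 else a)) + i) := by
  intro t ht
  have hp2 : 0 < p2 := hb0.trans hbp
  have hposition : ∀ i ≤ p2, (∑ j ∈ Icc 1 i,
      (if ∃ j' ∈ Icc 1 b, j = (j' * p2 + b - 1) / b then a + 1 else a)) + i =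
        i + i * p1 / p2 := fun i hi => by
    rw [Nat.sum_Icc_ite_exists_ceil_div hb0 hbp.le hi,
      show i * p1 = i * b + i * a * p2 by rw [hdiv]; ring, Nat.add_mul_div_right _ _ hp2]
    ring
  rw [hs.dhondt_eq_one_iff_exists hp2]
  constructor
  · rintro ⟨i, hlo, hhi⟩
    have hi1 : 1 ≤ i := by nlinarith
    have hip : i ≤ p2 := by nlinarith
    exact ⟨i, hi1, hip, by rw [hposition i hip, Nat.succ_eq_add_mul_div_iff hp2]; exact ⟨hlo, hhi⟩⟩
  · rintro ⟨i, -, hip, ht⟩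
    rw [hposition i hip, Nat.succ_eq_add_mul_div_iff hp2] at ht
    exact ⟨i, ht⟩

/-- Explicit description of the d'Hondt (`c = 1`) two-party sequence: with
`p_1 = a·p_2 + b`, `0 < b < p_2`, one period is `1^a 2 1^{k_2} 2 ⋯ 1^{k_{p_2}} 2`
where `k_i = a + 1` iff `i ∈ {⌈j·p_2/b⌉ : j = 1, …, b}` and `k_i = a`
otherwise.  Party `0` is party 1 and party `1` is party 2; the `i`-th seat for
party 2 occupies position `Σ_{j≤i} k_j + i` (1-indexed). -/
theorem dhondt_explicit_sequence (p1 p2 a b : ℕ) (hco : Nat.Coprime p1 p2)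
    (hp2 : 2 ≤ p2) (h12 : p2 < p1)
    (hdiv : p1 = a * p2 + b) (hb0 : 0 < b) (hbp : b < p2)
    (s : ℕ → Fin 2) (hs : IsStationarySeq ![p1, p2] 1 s) :
    ∀ t, t < p1 + p2 →
      (s t = 1 ↔ ∃ i, 1 ≤ i ∧ i ≤ p2 ∧
        t + 1 = (∑ j ∈ Icc 1 i,
          (if ∃ j' ∈ Icc 1 b, j = (j' * p2 + b - 1) / b then a + 1 else a)) + i) :=
  dhondt_explicit_sequence_general p1 p2 a b hdiv hb0 hbp s hs
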